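/- arXiv:2509.17929 — 6 statements merged into one kernel-verified Lean document; each statement's English description precedes it below -/
import Mathlib

section
/- Assume F̃ ⊆ X is a block and that F := F̃^Γ is nonempty. Then for every h ∈ G^Γ one has: h • F̃ = F̃ if and only if h • F = F. In other words, the stabilizer of F̃ in G^Γ coincides with the stabilizer of F in G^Γ. -/
open scoped Pointwise

/-- Let `G` act on `X`, `Γ` act on `G` by group automorphisms and on `X`, compatibly.
If `Ftil ⊆ X` is a block (for every `g`, `g • Ftil = Ftil` or `(g • Ftil) ∩ Ftil = ∅`) and
`F = Ftil^Γ` is nonempty, then for every `Γ`-fixed `h ∈ G` one has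
`h • Ftil = Ftil ↔ h • F = F`. -/
theorem stmt1 {G Γ X : Type*} [Group G] [Group Γ] [MulAction G X]
    [MulDistribMulAction Γ G] [MulAction Γ X]
    (compat : ∀ (γ : Γ) (g : G) (x : X), γ • (g • x) = (γ • g) • (γ • x))
    (Ftil : Set X)
    (hblock : ∀ g : G, g • Ftil = Ftil ∨ (g • Ftil) ∩ Ftil = ∅)
    (F : Set X) (hF : F = {x ∈ Ftil | ∀ γ : Γ, γ • x = x}) (hne : F.Nonempty)
    (h : G) (hh : ∀ γ : Γ, γ • h = h) :
    h • Ftil = Ftil ↔ h • F = F := by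
  have key : ∀ g : G, (∀ γ : Γ, γ • g = g) → g • Ftil = Ftil → g • F ⊆ F := by
    intro g hg hgF x hx
    obtain ⟨y, hy, rfl⟩ := hx
    rw [hF] at hy ⊢
    refine ⟨?_, ?_⟩
    · rw [← hgF]; exact Set.smul_mem_smul_set hy.1
    · intro γ
      rw [compat, hg, hy.2]
  constructor
  · intro hFtil
    apply subset_antisymm (key h hh hFtil)
    intro x hx
    have hinv : h⁻¹ • Ftil = Ftil := by
      rw [inv_smul_eq_iff]; exact hFtil.symm
    have hhinv : ∀ γ : Γ, γ • h⁻¹ = h⁻¹ := fun γ => by rw [smul_inv', hh]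
    have := key h⁻¹ hhinv hinv (Set.smul_mem_smul_set hx)
    refine ⟨h⁻¹ • x, this, by simp⟩
  · intro hFF
    obtain ⟨x, hx⟩ := hne
    rcases hblock h with h1 | h2
    · exact h1
    · exfalso
      have hx1 : h • x ∈ F := by rw [← hFF]; exact Set.smul_mem_smul_set hx
      have hx2 : h • x ∈ Ftil := by rw [hF] at hx1; exact hx1.1
      have hx3 : h • x ∈ h • Ftil := Set.smul_mem_smul_set (by rw [hF] at hx; exact hx.1)
      exact Set.eq_empty_iff_forall_notMem.mp h2 (h • x) ⟨hx3, hx2⟩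
end

section
/- Let F̃ ⊆ X be a block, and let z : Γ → G be a 1-cocycle such that z γ • F̃ = F̃ for every γ ∈ Γ. Define the twisted fixed sets ᶻF := {x ∈ F̃ | ∀ γ, z γ • (γ • x) = x} and ᶻH := {g ∈ G | ∀ γ, z γ * (γ • g) * (z γ)⁻¹ = g}, and assume ᶻF is nonempty. Then ᶻH is a subgroup of G, and for every h ∈ ᶻH one has: h • F̃ = F̃ if and only if h • ᶻF = ᶻF. (The stabilizer of the twisted facet in the twisted fixed-point group equals the twist of the stabilizer.) -/
open scoped Pointwise

/-- Let `Ftil` be a block for the `G`-action on `X` and `z` a 1-cocycle stabilizing `Ftil`.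
With `ᶻF` the set of twisted fixed points of `Ftil` and `ᶻH` the twisted fixed-point group,
assumed nonempty, `ᶻH` is a subgroup of `G` and for `h ∈ ᶻH` one has
`h • Ftil = Ftil ↔ h • ᶻF = ᶻF`. -/
theorem stmt4 {Γ G X : Type*} [Group Γ] [Group G] [MulDistribMulAction Γ G]
    [MulAction G X] [MulAction Γ X]
    (compat : ∀ (γ : Γ) (g : G) (x : X), γ • (g • x) = (γ • g) • (γ • x))
    (Ftil : Set X)
    (hblock : ∀ g : G, g • Ftil = Ftil ∨ (g • Ftil) ∩ Ftil = ∅)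
    (z : Γ → G) (hz : ∀ γ δ : Γ, z (γ * δ) = z γ * (γ • z δ))
    (hzF : ∀ γ : Γ, z γ • Ftil = Ftil)
    (zF : Set X) (hzFdef : zF = {x ∈ Ftil | ∀ γ : Γ, z γ • (γ • x) = x})
    (zH : Set G) (hzHdef : zH = {g : G | ∀ γ : Γ, z γ * (γ • g) * (z γ)⁻¹ = g})
    (hne : zF.Nonempty) :
    (∃ S : Subgroup G, (S : Set G) = zH) ∧
    ∀ h ∈ zH, (h • Ftil = Ftil ↔ h • zF = zF) := by
  subst hzFdef hzHdef
  -- membership of h•x in zF when h ∈ zH, x ∈ zF, h•Ftil = Ftil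
  have key : ∀ h ∈ {g : G | ∀ γ : Γ, z γ * (γ • g) * (z γ)⁻¹ = g},
      h • Ftil = Ftil →
      ∀ x ∈ {x ∈ Ftil | ∀ γ : Γ, z γ • (γ • x) = x},
      h • x ∈ {x ∈ Ftil | ∀ γ : Γ, z γ • (γ • x) = x} := by
    intro h hh hF x hx
    refine ⟨?_, ?_⟩
    · rw [← hF]; exact Set.smul_mem_smul_set hx.1
    · intro γ
      calc z γ • (γ • (h • x)) = (z γ * (γ • h) * (z γ)⁻¹) • (z γ • (γ • x)) := by
            rw [compat, smul_smul, smul_smul]; congr 1; group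
        _ = h • (z γ • (γ • x)) := by rw [hh γ]
        _ = h • x := by rw [hx.2 γ]
  constructor
  · refine ⟨⟨⟨⟨{g : G | ∀ γ : Γ, z γ * (γ • g) * (z γ)⁻¹ = g}, ?_⟩, ?_⟩, ?_⟩, rfl⟩
    · intro a b ha hb γ
      have := ha γ; have := hb γ
      calc z γ * (γ • (a * b)) * (z γ)⁻¹
          = (z γ * (γ • a) * (z γ)⁻¹) * (z γ * (γ • b) * (z γ)⁻¹) := by
            rw [smul_mul']; group
        _ = a * b := by rw [ha γ, hb γ]
    · intro γ; simp
    · intro a ha γ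
      have := ha γ
      calc z γ * (γ • a⁻¹) * (z γ)⁻¹ = (z γ * (γ • a) * (z γ)⁻¹)⁻¹ := by
            rw [smul_inv']; group
        _ = a⁻¹ := by rw [ha γ]
  · intro h hh
    constructor
    · intro hF
      have hinv : h⁻¹ ∈ {g : G | ∀ γ : Γ, z γ * (γ • g) * (z γ)⁻¹ = g} := by
        intro γ
        calc z γ * (γ • h⁻¹) * (z γ)⁻¹ = (z γ * (γ • h) * (z γ)⁻¹)⁻¹ := by
              rw [smul_inv']; group
          _ = h⁻¹ := by rw [hh γ]
      have hFinv : h⁻¹ • Ftil = Ftil := by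
        rw [← hF, smul_smul, inv_mul_cancel, one_smul]; exact hF.symm
      apply Set.Subset.antisymm
      · rintro _ ⟨x, hx, rfl⟩
        exact key h hh hF x hx
      · intro x hx
        have : h⁻¹ • x ∈ {x ∈ Ftil | ∀ γ : Γ, z γ • (γ • x) = x} :=
          key h⁻¹ hinv hFinv x hx
        exact ⟨h⁻¹ • x, this, by simp⟩
    · intro hzFeq
      obtain ⟨x, hx⟩ := hne
      have hx' : h • x ∈ {x ∈ Ftil | ∀ γ : Γ, z γ • (γ • x) = x} := by
        rw [← hzFeq]; exact Set.smul_mem_smul_set hx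
      rcases hblock h with h1 | h2
      · exact h1
      · exfalso
        have : h • x ∈ (h • Ftil) ∩ Ftil := ⟨Set.smul_mem_smul_set hx.1, hx'.1⟩
        rw [h2] at this; exact this
end

section
/- Let T be a subset of ZMod N with -T = T, and suppose m is even. Then the negation-invariant elements of the translation orbit of T are exactly T and T + ((m/2 : ℕ) : ZMod N), and these two subsets are distinct; in particular there are exactly 2 negation-invariant elements in the translation orbit of T. -/
open Pointwise

namespace Stmt8Aux

variable {N : ℕ} [NeZero N]

lemma image_comp (T : Set (ZMod N)) (c d : ZMod N) :
    (fun x : ZMod N => x + d) '' ((fun x : ZMod N => x + c) '' T) =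
    (fun x : ZMod N => x + (c + d)) '' T := by
  rw [Set.image_image]; simp only [add_assoc]

lemma image_inj (c : ZMod N) {A B : Set (ZMod N)} :
    (fun x : ZMod N => x + c) '' A = (fun x : ZMod N => x + c) '' B ↔ A = B :=
  Set.image_eq_image (add_left_injective c)

lemma vadd_eq_image (T : Set (ZMod N)) (c : ZMod N) :
    c +ᵥ T = (fun x : ZMod N => x + c) '' T := by
  rw [← Set.image_vadd]
  congr 1
  funext x
  simp [add_comm]

/-- characterization of the stabilizer of a translation orbit in `ZMod N`. -/
lemma stab_spec (T : Set (ZMod N)) {m : ℕ}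
    (hm : m = {S : Set (ZMod N) | ∃ c : ZMod N,
      S = (fun x : ZMod N => x + c) '' T}.ncard) :
    m ∣ N ∧ ∀ c : ZMod N, ((fun x : ZMod N => x + c) '' T = T ↔ m ∣ c.val) := by
  classical
  have horbit : AddAction.orbit (ZMod N) T =
      {S : Set (ZMod N) | ∃ c : ZMod N, S = (fun x : ZMod N => x + c) '' T} := by
    ext S
    simp only [AddAction.mem_orbit_iff, Set.mem_setOf_eq]
    constructor
    · rintro ⟨g, rfl⟩; exact ⟨g, (vadd_eq_image T g)⟩
    · rintro ⟨g, rfl⟩; exact ⟨g, (vadd_eq_image T g)⟩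
  set H := AddAction.stabilizer (ZMod N) T with hH
  obtain ⟨K, hK⟩ : ∃ K, Fintype.card H = K := ⟨_, rfl⟩
  have hmcard : m = Fintype.card (AddAction.orbit (ZMod N) T) := by
    rw [hm, ← horbit, ← Nat.card_coe_set_eq, Nat.card_eq_fintype_card]
  have horbstab : m * K = N := by
    rw [hmcard, ← hK]
    rw [AddAction.card_orbit_mul_card_stabilizer_eq_card_addGroup (ZMod N) T, ZMod.card]
  have hN : 0 < N := Nat.pos_of_ne_zero (NeZero.ne N)
  have hK0 : 0 < K := hK ▸ Fintype.card_pos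
  have hm0 : 0 < m := by
    rcases Nat.eq_zero_or_pos m with h | h
    · rw [h, zero_mul] at horbstab; omega
    · exact h
  -- membership in H as Sets
  have hmemH : ∀ d : ZMod N, d ∈ H ↔ (fun x : ZMod N => x + d) '' T = T := by
    intro d
    rw [AddAction.mem_stabilizer_iff, vadd_eq_image]
  -- forward: d ∈ H → m ∣ d.val
  have hfwd : ∀ d : ZMod N, d ∈ H → m ∣ d.val := by
    intro d hd
    have h1 : addOrderOf d ∣ K := by
      have := addOrderOf_dvd_natCard (⟨d, hd⟩ : H)
      rwa [AddSubgroup.addOrderOf_mk, Nat.card_eq_fintype_card, hK] at this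
    have h2 : K • d = 0 := by
      rw [← addOrderOf_dvd_iff_nsmul_eq_zero] at *
      exact h1
    have h3 : ((K * d.val : ℕ) : ZMod N) = 0 := by
      push_cast
      rw [ZMod.natCast_zmod_val, ← nsmul_eq_mul]
      exact h2
    rw [ZMod.natCast_eq_zero_iff] at h3
    have h4 : K * m ∣ K * d.val := by rwa [mul_comm K m, horbstab]
    exact (Nat.mul_dvd_mul_iff_left hK0).mp h4
  refine ⟨⟨K, horbstab.symm⟩, fun c => ?_⟩
  constructor
  · intro h; exact hfwd c ((hmemH c).mpr h)
  · -- converse via counting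
    intro hdvd
    -- the finset of multiples of m
    have hfilt : (Finset.univ.filter (fun x : ZMod N => m ∣ x.val)) =
        (Finset.range K).image (fun j => ((m * j : ℕ) : ZMod N)) := by
      ext x
      simp only [Finset.mem_filter, Finset.mem_univ, true_and, Finset.mem_image,
        Finset.mem_range]
      constructor
      · rintro ⟨j, hj⟩
        refine ⟨j, ?_, ?_⟩
        · have hx : x.val < N := ZMod.val_lt x
          rw [hj, ← horbstab] at hx
          exact (Nat.mul_lt_mul_left hm0).mp hx
        · rw [← hj, ZMod.natCast_zmod_val]
      · rintro ⟨j, hjK, rfl⟩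
        have hlt : m * j < N := by
          rw [← horbstab]; exact (Nat.mul_lt_mul_left hm0).mpr hjK
        rw [ZMod.val_cast_of_lt hlt]
        exact ⟨j, rfl⟩
    have hcardfilt : (Finset.univ.filter (fun x : ZMod N => m ∣ x.val)).card = K := by
      rw [hfilt, Finset.card_image_of_injOn, Finset.card_range]
      intro a ha b hb hab
      simp only [Finset.coe_range, Set.mem_Iio] at ha hb
      have h1 : m * a < N := by rw [← horbstab]; exact (Nat.mul_lt_mul_left hm0).mpr ha
      have h2 : m * b < N := by rw [← horbstab]; exact (Nat.mul_lt_mul_left hm0).mpr hb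
      have := congrArg ZMod.val hab
      rw [ZMod.val_cast_of_lt h1, ZMod.val_cast_of_lt h2] at this
      exact Nat.eq_of_mul_eq_mul_left hm0 this
    have hcardH : (Finset.univ.filter (fun x : ZMod N => x ∈ H)).card = K := by
      rw [← hK, Fintype.card_subtype]
    have hsub : (Finset.univ.filter (fun x : ZMod N => x ∈ H)) ⊆
        (Finset.univ.filter (fun x : ZMod N => m ∣ x.val)) := by
      intro x hx
      simp only [Finset.mem_filter, Finset.mem_univ, true_and] at *
      exact hfwd x hx
    have heq := Finset.eq_of_subset_of_card_le hsub (by rw [hcardfilt, hcardH])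
    have : c ∈ Finset.univ.filter (fun x : ZMod N => x ∈ H) := by
      rw [heq]
      simp only [Finset.mem_filter, Finset.mem_univ, true_and]
      exact hdvd
    simp only [Finset.mem_filter, Finset.mem_univ, true_and] at this
    exact (hmemH c).mp this


end Stmt8Aux

open Stmt8Aux in
/-- Type `²A_n`: identify the vertices of the affine Dynkin diagram of type `A_n` with
`ZMod (n+1)`; translations realize `Ξ^nr` and negation realizes the unramified Galois
involution. If `T` is a negation-invariant type whose translation orbit has even cardinality
`m`, then the negation-invariant elements of the translation orbit of `T` are exactly `T`
and `T + m/2`, these two are distinct, and so there are exactly `2` negation-invariant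
elements in the translation orbit. -/
theorem stmt8 (n : ℕ) (hn : 1 ≤ n) (T : Set (ZMod (n + 1)))
    (hTneg : (fun x : ZMod (n + 1) => -x) '' T = T)
    (m : ℕ)
    (hm : m = {S : Set (ZMod (n + 1)) | ∃ c : ZMod (n + 1),
      S = (fun x : ZMod (n + 1) => x + c) '' T}.ncard)
    (hmeven : Even m) :
    {S : Set (ZMod (n + 1)) |
        (∃ c : ZMod (n + 1), S = (fun x : ZMod (n + 1) => x + c) '' T) ∧
        (fun x : ZMod (n + 1) => -x) '' S = S} =
      {T, (fun x : ZMod (n + 1) => x + ((m / 2 : ℕ) : ZMod (n + 1))) '' T} ∧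
    (fun x : ZMod (n + 1) => x + ((m / 2 : ℕ) : ZMod (n + 1))) '' T ≠ T ∧
    {S : Set (ZMod (n + 1)) |
        (∃ c : ZMod (n + 1), S = (fun x : ZMod (n + 1) => x + c) '' T) ∧
        (fun x : ZMod (n + 1) => -x) '' S = S}.ncard = 2 := by
  obtain ⟨hmdvdN, stab⟩ := stab_spec T hm
  have hN0 : 0 < n + 1 := Nat.succ_pos n
  have hTmem : T ∈ {S : Set (ZMod (n + 1)) | ∃ c : ZMod (n + 1),
      S = (fun x : ZMod (n + 1) => x + c) '' T} := ⟨0, by simp⟩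
  have hm0 : 0 < m := by
    rw [hm]
    exact (Set.ncard_pos (Set.toFinite _)).mpr ⟨T, hTmem⟩
  have hm2 : 2 ≤ m := by
    obtain ⟨p, hp⟩ := hmeven; omega
  have hmleN : m ≤ n + 1 := Nat.le_of_dvd hN0 hmdvdN
  obtain ⟨half, hhalfdef⟩ : ∃ q, m / 2 = q := ⟨_, rfl⟩
  obtain ⟨p, hp⟩ := hmeven
  have hh2 : half + half = m := by omega
  have hh0 : 0 < half := by omega
  have hhltm : half < m := by omega
  simp only [hhalfdef]
  have hvalh : ((half : ℕ) : ZMod (n + 1)).val = half := ZMod.val_cast_of_lt (by omega)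
  -- negation image of a translate
  have negimg : ∀ c : ZMod (n + 1),
      (fun x : ZMod (n + 1) => -x) '' ((fun x : ZMod (n + 1) => x + c) '' T)
      = (fun x : ZMod (n + 1) => x + (-c)) '' T := by
    intro c
    rw [Set.image_image]
    have e : (fun x : ZMod (n + 1) => -(x + c))
        = (fun x : ZMod (n + 1) => x + (-c)) ∘ (fun x : ZMod (n + 1) => -x) := by
      funext x; simp [neg_add, add_comm]
    rw [e, Set.image_comp, hTneg]
  -- criterion for negation invariance of a translate
  have hcrit : ∀ c : ZMod (n + 1),
      ((fun x : ZMod (n + 1) => -x) '' ((fun x : ZMod (n + 1) => x + c) '' T)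
        = (fun x : ZMod (n + 1) => x + c) '' T) ↔ half ∣ c.val := by
    intro c
    rw [negimg c]
    rw [← image_inj c]
    rw [image_comp, image_comp, neg_add_cancel]
    have e0 : (fun x : ZMod (n + 1) => x + (0 : ZMod (n + 1))) '' T = T := by simp
    rw [e0, eq_comm, stab (c + c), ZMod.val_add c c, Nat.dvd_mod_iff hmdvdN]
    constructor
    · rintro ⟨j, hj⟩
      refine ⟨j, ?_⟩
      have e1 : m * j = half * j + half * j := by rw [← hh2]; ring
      omega
    · rintro ⟨j, hj⟩
      refine ⟨j, ?_⟩
      have e1 : m * j = half * j + half * j := by rw [← hh2]; ring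
      omega
  -- the set equality
  have hAeq : {S : Set (ZMod (n + 1)) |
        (∃ c : ZMod (n + 1), S = (fun x : ZMod (n + 1) => x + c) '' T) ∧
        (fun x : ZMod (n + 1) => -x) '' S = S} =
      {T, (fun x : ZMod (n + 1) => x + ((half : ℕ) : ZMod (n + 1))) '' T} := by
    ext S
    simp only [Set.mem_setOf_eq, Set.mem_insert_iff, Set.mem_singleton_iff]
    constructor
    · rintro ⟨⟨c, rfl⟩, hSneg⟩
      obtain ⟨j, hj⟩ := (hcrit c).mp hSneg
      rcases Nat.even_or_odd j with ⟨i, hi⟩ | ⟨i, hi⟩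
      · left
        refine (stab c).mpr ⟨i, ?_⟩
        have e3 : half * j = m * i := by rw [hi, ← hh2]; ring
        omega
      · right
        have hd : m ∣ ((m * i : ℕ) : ZMod (n + 1)).val := by
          rw [ZMod.val_natCast, Nat.dvd_mod_iff hmdvdN]
          exact ⟨i, rfl⟩
        have hceq : c = ((m * i : ℕ) : ZMod (n + 1)) + ((half : ℕ) : ZMod (n + 1)) := by
          have e1 : c = ((c.val : ℕ) : ZMod (n + 1)) := (ZMod.natCast_zmod_val c).symm
          rw [e1, hj]
          have e2 : half * j = m * i + half := by rw [hi, ← hh2]; ring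
          rw [e2]
          push_cast
          ring
        rw [hceq, ← image_comp, (stab _).mpr hd]
    · rintro (rfl | rfl)
      · exact ⟨⟨0, by simp⟩, hTneg⟩
      · refine ⟨⟨((half : ℕ) : ZMod (n + 1)), rfl⟩, (hcrit _).mpr ?_⟩
        rw [hvalh]
  have hne : (fun x : ZMod (n + 1) => x + ((half : ℕ) : ZMod (n + 1))) '' T ≠ T := by
    intro heq
    have hdd := (stab _).mp heq
    rw [hvalh] at hdd
    have := Nat.le_of_dvd hh0 hdd
    omega
  refine ⟨hAeq, hne, ?_⟩
  rw [hAeq]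
  exact Set.ncard_pair (Ne.symm hne)
end

section
/- Let T be a subset of ZMod N with -T = T, and suppose m is even (hence N is even, since m divides N). Then T + ((N/2 : ℕ) : ZMod N) = T + ((m/2 : ℕ) : ZMod N) if and only if N/m is odd. Equivalently, the two negation-invariant elements of the translation orbit of T lie in the same orbit under the translation by N/2 (the action of Ξ) exactly when N/m is odd, and in two distinct Ξ-orbits when N/m is even. -/
open Pointwise

private lemma stab_aux {N : ℕ} [NeZero N] (T : Set (ZMod N)) (m : ℕ)
    (hm : m = Nat.card (AddAction.orbit (ZMod N) T)) :
    m ∣ N ∧ 0 < m ∧ ∀ c : ZMod N, (c ∈ AddAction.stabilizer (ZMod N) T ↔ m ∣ c.val) := by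
  classical
  haveI : Fintype (AddAction.orbit (ZMod N) T) := Fintype.ofFinite _
  haveI : Fintype (AddAction.stabilizer (ZMod N) T) := Fintype.ofFinite _
  have hNpos : 0 < N := Nat.pos_of_ne_zero (NeZero.ne N)
  set H := AddAction.stabilizer (ZMod N) T with hH
  set k := Fintype.card H with hk
  have horb : Fintype.card (AddAction.orbit (ZMod N) T) * k = Fintype.card (ZMod N) :=
    AddAction.card_orbit_mul_card_stabilizer_eq_card_addGroup (ZMod N) T
  have hmcard : m = Fintype.card (AddAction.orbit (ZMod N) T) := by
    rw [hm, Nat.card_eq_fintype_card]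
  have hNcard : Fintype.card (ZMod N) = N := ZMod.card N
  have hmk : m * k = N := by rw [hmcard]; rw [horb, hNcard]
  have hmpos : 0 < m := by
    rcases Nat.eq_zero_or_pos m with h | h
    · rw [h, Nat.zero_mul] at hmk; omega
    · exact h
  have hkpos : 0 < k := by
    rcases Nat.eq_zero_or_pos k with h | h
    · rw [h, Nat.mul_zero] at hmk; omega
    · exact h
  -- H ⊆ {c | m ∣ c.val}
  have hsub : ∀ c : ZMod N, c ∈ H → m ∣ c.val := by
    intro c hc
    have h1 : addOrderOf c ∣ k := by
      have := AddSubgroup.addOrderOf_dvd_natCard H hc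
      rwa [Nat.card_eq_fintype_card] at this
    have h2 : k • c = 0 := (addOrderOf_dvd_iff_nsmul_eq_zero).mp h1
    have h3 : ((k * c.val : ℕ) : ZMod N) = 0 := by
      push_cast
      rw [ZMod.natCast_val, ZMod.cast_id]
      rw [nsmul_eq_mul] at h2
      exact_mod_cast h2
    have h4 : N ∣ k * c.val := (ZMod.natCast_eq_zero_iff _ _).mp h3
    have h5 : m * k ∣ c.val * k := by
      rw [hmk]; rwa [Nat.mul_comm c.val k]
    exact (Nat.mul_dvd_mul_iff_right hkpos).mp h5
  -- the set K = {c | m ∣ c.val} has exactly k elements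
  set K : Set (ZMod N) := {c : ZMod N | m ∣ c.val} with hK
  have hcardK : Nat.card K = k := by
    have hb : Function.Bijective (fun j : Fin k =>
        (⟨((m * (j : ℕ) : ℕ) : ZMod N), by
          show m ∣ ZMod.val _
          rw [ZMod.val_natCast, Nat.mod_eq_of_lt (by
            calc m * (j : ℕ) < m * k := mul_lt_mul_of_pos_left j.2 hmpos
              _ = N := hmk)]
          exact Dvd.intro _ rfl⟩ : K)) := by
      constructor
      · intro j1 j2 hj
        have hv : ((m * (j1 : ℕ) : ℕ) : ZMod N) = ((m * (j2 : ℕ) : ℕ) : ZMod N) := by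
          exact congrArg (fun x => (x : K).1) hj
        have hlt1 : m * (j1 : ℕ) < N := by
          calc m * (j1 : ℕ) < m * k := mul_lt_mul_of_pos_left j1.2 hmpos
            _ = N := hmk
        have hlt2 : m * (j2 : ℕ) < N := by
          calc m * (j2 : ℕ) < m * k := mul_lt_mul_of_pos_left j2.2 hmpos
            _ = N := hmk
        have := congrArg ZMod.val hv
        rw [ZMod.val_natCast, ZMod.val_natCast, Nat.mod_eq_of_lt hlt1,
          Nat.mod_eq_of_lt hlt2] at this
        have : (j1 : ℕ) = (j2 : ℕ) := Nat.eq_of_mul_eq_mul_left hmpos this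
        exact Fin.ext this
      · rintro ⟨c, hc⟩
        obtain ⟨t, ht⟩ := hc
        have hvlt : c.val < N := ZMod.val_lt c
        have htk : t < k := by
          by_contra h
          push_neg at h
          have : N ≤ c.val := by
            calc N = m * k := hmk.symm
              _ ≤ m * t := Nat.mul_le_mul_left m h
              _ = c.val := ht.symm
          omega
        refine ⟨⟨t, htk⟩, ?_⟩
        apply Subtype.ext
        show ((m * t : ℕ) : ZMod N) = c
        rw [← ht, ZMod.natCast_val, ZMod.cast_id]
    have := Nat.card_eq_of_bijective _ hb
    rw [Nat.card_eq_fintype_card, Fintype.card_fin] at this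
    exact this.symm
  have hHK : (H : Set (ZMod N)) = K := by
    apply Set.eq_of_subset_of_ncard_le
    · intro c hc; exact hsub c hc
    · have h1 : K.ncard = k := by
        rw [← Nat.card_coe_set_eq]; exact hcardK
      have h2 : (H : Set (ZMod N)).ncard = k := by
        rw [← Nat.card_coe_set_eq, SetLike.coe_sort_coe, Nat.card_eq_fintype_card]
      rw [h1, h2]
    · exact Set.toFinite K
  have hmdvdN : m ∣ N := ⟨k, hmk.symm⟩
  refine ⟨hmdvdN, hmpos, fun c => ?_⟩
  constructor
  · intro hc; exact hsub c hc
  · intro hc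
    have : c ∈ (H : Set (ZMod N)) := by rw [hHK]; exact hc
    exact this

/-- Type `²A_n`: identify the vertices of the affine Dynkin diagram of type `A_n` with
`ZMod N`, `N = n+1`; translations realize `Ξ^nr`, negation realizes the unramified Galois
involution, and (for `N` even) translation by `N/2` realizes `Ξ`. Let `T` be a
negation-invariant type whose translation orbit has even cardinality `m` (so `N` is even
since `m ∣ N`). Then `T + N/2 = T + m/2` if and only if `N/m` is odd: the two
negation-invariant elements of the translation orbit of `T` lie in the same `Ξ`-orbit
exactly when `N/m` is odd, and in two distinct `Ξ`-orbits when `N/m` is even. -/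
theorem stmt9 (n : ℕ) (hn : 1 ≤ n) (T : Set (ZMod (n + 1)))
    (hTneg : (fun x : ZMod (n + 1) => -x) '' T = T)
    (m : ℕ)
    (hm : m = {S : Set (ZMod (n + 1)) | ∃ c : ZMod (n + 1),
      S = (fun x : ZMod (n + 1) => x + c) '' T}.ncard)
    (hmeven : Even m) :
    (fun x : ZMod (n + 1) => x + (((n + 1) / 2 : ℕ) : ZMod (n + 1))) '' T =
        (fun x : ZMod (n + 1) => x + ((m / 2 : ℕ) : ZMod (n + 1))) '' T ↔
      Odd ((n + 1) / m) := by
  classical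
  have hNpos : 0 < n + 1 := Nat.succ_pos n
  -- translation images are vadd
  have himg : ∀ (a : ZMod (n + 1)) (S : Set (ZMod (n + 1))),
      (fun x : ZMod (n + 1) => x + a) '' S = a +ᵥ S := by
    intro a S
    have : (fun x : ZMod (n + 1) => x + a) = (fun x : ZMod (n + 1) => a +ᵥ x) := by
      funext x; exact add_comm x a
    rw [this, Set.image_vadd]
  -- identify the orbit set
  have horbset : {S : Set (ZMod (n + 1)) | ∃ c : ZMod (n + 1),
      S = (fun x : ZMod (n + 1) => x + c) '' T} = AddAction.orbit (ZMod (n + 1)) T := by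
    ext S
    simp only [Set.mem_setOf_eq, AddAction.mem_orbit_iff]
    constructor
    · rintro ⟨c, rfl⟩; exact ⟨c, (himg c T).symm⟩
    · rintro ⟨c, rfl⟩; exact ⟨c, (himg c T).symm⟩
  have hmcard : m = Nat.card (AddAction.orbit (ZMod (n + 1)) T) := by
    rw [hm, ← horbset, ← Nat.card_coe_set_eq]
  obtain ⟨hmdvdN, hmpos, hstab⟩ := stab_aux T m hmcard
  obtain ⟨k, hNk⟩ := hmdvdN
  have hkpos : 0 < k := by
    rcases Nat.eq_zero_or_pos k with h | h
    · rw [h, Nat.mul_zero] at hNk; omega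
    · exact h
  obtain ⟨t, ht⟩ := hmeven
  have hm2t : m = 2 * t := by omega
  have htpos : 0 < t := by omega
  -- image equality ↔ difference in stabilizer
  have hdiff : ∀ a b : ZMod (n + 1),
      (a +ᵥ T = b +ᵥ T) ↔ (a - b) ∈ AddAction.stabilizer (ZMod (n + 1)) T := by
    intro a b
    rw [AddAction.mem_stabilizer_iff]
    constructor
    · intro h
      have := congrArg (fun S => (-b) +ᵥ S) h
      simp only [vadd_vadd] at this
      rw [neg_add_cancel, zero_vadd] at this
      rw [sub_eq_neg_add]
      exact this
    · intro h
      have := congrArg (fun S => b +ᵥ S) h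
      simp only [vadd_vadd] at this
      have hba : b + (a - b) = a := by ring
      rw [hba] at this
      exact this
  -- natural number arithmetic facts
  have hmleN : m ≤ n + 1 := by
    calc m ≤ m * k := Nat.le_mul_of_pos_right m hkpos
      _ = n + 1 := hNk.symm
  have hle : m / 2 ≤ (n + 1) / 2 := Nat.div_le_div_right hmleN
  have hN2tk : n + 1 = 2 * (t * k) := by rw [hNk, hm2t]; ring
  have hN2 : (n + 1) / 2 = t * k := by omega
  have hm2 : m / 2 = t := by omega
  have hval : ((((n + 1) / 2 : ℕ) : ZMod (n + 1)) - ((m / 2 : ℕ) : ZMod (n + 1))) =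
      (((n + 1) / 2 - m / 2 : ℕ) : ZMod (n + 1)) := by
    rw [Nat.cast_sub hle]
  have hvallt : (n + 1) / 2 - m / 2 < n + 1 :=
    lt_of_le_of_lt (Nat.sub_le _ _) (Nat.div_lt_self hNpos one_lt_two)
  rw [himg, himg, hdiff, hstab, hval, ZMod.val_natCast, Nat.mod_eq_of_lt hvallt]
  -- now a pure ℕ statement
  have hNm : (n + 1) / m = k := by rw [hNk]; exact Nat.mul_div_cancel_left k hmpos
  rw [hNm, hN2, hm2, hm2t, Nat.odd_iff]
  have hsub2 : t * k - t = t * (k - 1) := by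
    rw [Nat.mul_sub, Nat.mul_one]
  rw [hsub2]
  constructor
  · intro hdvd
    obtain ⟨u, hu⟩ := hdvd
    have : k - 1 = 2 * u := by
      have h1 : t * (k - 1) = t * (2 * u) := by rw [hu]; ring
      exact Nat.eq_of_mul_eq_mul_left htpos h1
    omega
  · intro hodd
    refine ⟨(k - 1) / 2, ?_⟩
    have h2 : 2 ∣ k - 1 := by omega
    obtain ⟨v, hv⟩ := h2
    rw [hv]
    have hv2 : 2 * v / 2 = v := by omega
    rw [hv2]
    ring
end

section
/- Let T be a subset of Fin (n+1) with σ·T = T, and suppose that T ∩ E = ∅ or E ⊆ T. Then {T' ∈ O(T) | σ·T' = T'} = {T, τ·T}; moreover τ′·T = T and τ′·(τ·T) = τ·T. In particular the set of σ-invariant elements of O(T), as well as its quotient by the action of τ′, has exactly one element if τ·T = T and exactly two elements otherwise. -/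
/-!
The involution `τ′` fixes every non-extremal vertex and permutes `E`, so it fixes every type `T`
with `T ∩ E = ∅` or `E ⊆ T`. It commutes with `τ`, and `σ ∘ τ = τ ∘ τ′ ∘ σ`; hence `τ·T` is again
`σ`- and `τ′`-invariant. The orbit `O(T)` then collapses to `{T, τ·T}`, all of whose members are
`σ`-invariant.
-/

open Fin.NatCast

/-! Vertices of the affine Dynkin diagram of type `D_n` are `Fin (n + 1)`; `sigmaD`, `tauPrimeD`,
`tauD`, `extremalD` and `orbD` are `σ`, `τ′`, `τ`, `E` and `O(T)`. -/

def sigmaD (n : ℕ) : Fin (n + 1) → Fin (n + 1) := fun i =>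
  if (i : ℕ) = n - 1 then (↑n : Fin (n + 1))
  else if (i : ℕ) = n then (↑(n - 1) : Fin (n + 1))
  else i

def tauPrimeD (n : ℕ) : Fin (n + 1) → Fin (n + 1) := fun i =>
  if (i : ℕ) = 0 then (↑(1 : ℕ) : Fin (n + 1))
  else if (i : ℕ) = 1 then (↑(0 : ℕ) : Fin (n + 1))
  else if (i : ℕ) = n - 1 then (↑n : Fin (n + 1))
  else if (i : ℕ) = n then (↑(n - 1) : Fin (n + 1))
  else i

def tauD (n : ℕ) : Fin (n + 1) → Fin (n + 1) := fun i =>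
  if (i : ℕ) = 0 then (↑(n - 1) : Fin (n + 1))
  else if (i : ℕ) = 1 then (↑n : Fin (n + 1))
  else if (i : ℕ) = n - 1 then (↑(0 : ℕ) : Fin (n + 1))
  else if (i : ℕ) = n then (↑(1 : ℕ) : Fin (n + 1))
  else (↑(n - (i : ℕ)) : Fin (n + 1))

def extremalD (n : ℕ) : Set (Fin (n + 1)) :=
  {(↑(0 : ℕ) : Fin (n + 1)), (↑(1 : ℕ) : Fin (n + 1)), (↑(n - 1) : Fin (n + 1)),
    (↑n : Fin (n + 1))}

def orbD (n : ℕ) (T : Set (Fin (n + 1))) : Set (Set (Fin (n + 1))) :=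
  {T, tauD n '' T, tauPrimeD n '' T, (tauD n ∘ tauPrimeD n) '' T}

theorem Function.Involutive.image_eq_self_of_mapsTo {α : Type*} {f : α → α}
    (hf : Function.Involutive f) {T : Set α} (hT : Set.MapsTo f T T) : f '' T = T :=
  hT.image_subset.antisymm fun x hx => ⟨f x, hT hx, hf x⟩

theorem Function.Involutive.image_eq_self_of_fixes_compl {α : Type*} {f : α → α}
    (hf : Function.Involutive f) {E T : Set α} (hfE : Set.MapsTo f E E)
    (hfix : ∀ x ∉ E, f x = x) (hT : T ∩ E = ∅ ∨ E ⊆ T) : f '' T = T := by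
  refine hf.image_eq_self_of_mapsTo fun x hx => ?_
  by_cases hxE : x ∈ E
  · rcases hT with hT | hT
    · exact absurd ⟨hx, hxE⟩ (Set.eq_empty_iff_forall_notMem.mp hT x)
    · exact hT (hfE hxE)
  · rwa [hfix x hxE]

section
variable {n : ℕ}

theorem val_sigmaD (i : Fin (n + 1)) :
    (sigmaD n i : ℕ) = if (i : ℕ) = n - 1 then n else if (i : ℕ) = n then n - 1 else i := by
  unfold sigmaD
  split_ifs <;> simp (disch := omega) only [Fin.val_natCast, Nat.mod_eq_of_lt]

theorem val_tauPrimeD (hn : 1 ≤ n) (i : Fin (n + 1)) :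
    (tauPrimeD n i : ℕ) =
      if (i : ℕ) = 0 then 1 else if (i : ℕ) = 1 then 0
      else if (i : ℕ) = n - 1 then n else if (i : ℕ) = n then n - 1 else i := by
  unfold tauPrimeD
  split_ifs <;> simp (disch := omega) only [Fin.val_natCast, Nat.mod_eq_of_lt]

theorem val_tauD (hn : 1 ≤ n) (i : Fin (n + 1)) :
    (tauD n i : ℕ) =
      if (i : ℕ) = 0 then n - 1 else if (i : ℕ) = 1 then n
      else if (i : ℕ) = n - 1 then 0 else if (i : ℕ) = n then 1 else n - i := by
  unfold tauD
  split_ifs <;> simp (disch := omega) only [Fin.val_natCast, Nat.mod_eq_of_lt]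

theorem mem_extremalD_iff (hn : 1 ≤ n) (i : Fin (n + 1)) :
    i ∈ extremalD n ↔
      (i : ℕ) = 0 ∨ (i : ℕ) = 1 ∨ (i : ℕ) = n - 1 ∨ (i : ℕ) = n := by
  simp (disch := omega) only [extremalD, Set.mem_insert_iff, Set.mem_singleton_iff, Fin.ext_iff,
    Fin.val_natCast, Nat.mod_eq_of_lt]

theorem val_eq_extremal_or_between (i : Fin (n + 1)) :
    (i : ℕ) = 0 ∨ (i : ℕ) = 1 ∨ (i : ℕ) = n - 1 ∨ (i : ℕ) = n ∨
      2 ≤ (i : ℕ) ∧ (i : ℕ) ≤ n - 2 := by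
  omega

theorem tauPrimeD_involutive (hn : 3 ≤ n) : Function.Involutive (tauPrimeD n) := by
  intro i
  apply Fin.ext
  rcases val_eq_extremal_or_between i with h | h | h | h | h <;>
    simp (disch := omega) only [val_tauPrimeD (by omega : 1 ≤ n), if_pos, if_neg, if_true] <;>
    omega

theorem tauPrimeD_mapsTo_extremalD (hn : 1 ≤ n) :
    Set.MapsTo (tauPrimeD n) (extremalD n) (extremalD n) := by
  intro i hi
  rw [mem_extremalD_iff hn] at hi ⊢
  rw [val_tauPrimeD hn]
  split_ifs <;> omega

theorem tauPrimeD_eq_self_of_notMem (hn : 1 ≤ n) (i : Fin (n + 1)) (hi : i ∉ extremalD n) :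
    tauPrimeD n i = i := by
  rw [mem_extremalD_iff hn] at hi
  apply Fin.ext
  rw [val_tauPrimeD hn]
  split_ifs <;> omega

theorem tauPrimeD_image_eq_self (hn : 3 ≤ n) {T : Set (Fin (n + 1))}
    (hE : T ∩ extremalD n = ∅ ∨ extremalD n ⊆ T) : tauPrimeD n '' T = T :=
  (tauPrimeD_involutive hn).image_eq_self_of_fixes_compl (tauPrimeD_mapsTo_extremalD (by omega))
    (tauPrimeD_eq_self_of_notMem (by omega)) hE

theorem sigmaD_comp_tauD (hn : 3 ≤ n) :
    sigmaD n ∘ tauD n = tauD n ∘ tauPrimeD n ∘ sigmaD n := by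
  funext i
  apply Fin.ext
  rcases val_eq_extremal_or_between i with h | h | h | h | h <;>
    simp (disch := omega) only [Function.comp_apply, val_sigmaD, val_tauD (by omega : 1 ≤ n),
      val_tauPrimeD (by omega : 1 ≤ n), if_pos, if_neg, if_true]

theorem tauD_comp_tauPrimeD (hn : 3 ≤ n) :
    tauD n ∘ tauPrimeD n = tauPrimeD n ∘ tauD n := by
  funext i
  apply Fin.ext
  rcases val_eq_extremal_or_between i with h | h | h | h | h <;>
    simp (disch := omega) only [Function.comp_apply, val_tauD (by omega : 1 ≤ n),
      val_tauPrimeD (by omega : 1 ≤ n), if_pos, if_neg, if_true]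

theorem sigmaD_image_tauD_image (hn : 3 ≤ n) {T : Set (Fin (n + 1))} (hσ : sigmaD n '' T = T)
    (hτ' : tauPrimeD n '' T = T) : sigmaD n '' (tauD n '' T) = tauD n '' T := by
  rw [← Set.image_comp, sigmaD_comp_tauD hn, Set.image_comp, Set.image_comp, hσ, hτ']

theorem tauPrimeD_image_tauD_image (hn : 3 ≤ n) {T : Set (Fin (n + 1))}
    (hτ' : tauPrimeD n '' T = T) : tauPrimeD n '' (tauD n '' T) = tauD n '' T := by
  rw [← Set.image_comp, ← tauD_comp_tauPrimeD hn, Set.image_comp, hτ']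

theorem orbD_eq_pair {T : Set (Fin (n + 1))} (hτ' : tauPrimeD n '' T = T) :
    orbD n T = {T, tauD n '' T} := by
  rw [orbD, Set.image_comp, hτ']
  ext S
  simp only [Set.mem_insert_iff, Set.mem_singleton_iff]
  tauto

end

/-- Type `²D_n` (`n ≥ 4`): if `T` is a `σ`-invariant type with `T ∩ E = ∅` or `E ⊆ T`
(where `E` is the set of extremal vertices), then the `σ`-invariant elements of the orbit
`O(T)` are exactly `{T, τ·T}`, and both are fixed by `τ′`. In particular the set of
`σ`-invariant elements of `O(T)` (as well as its quotient by `τ′`) has exactly one element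
if `τ·T = T` and exactly two elements otherwise. -/
theorem stmt10 (n : ℕ) (hn : 4 ≤ n) (T : Set (Fin (n + 1)))
    (hσ : sigmaD n '' T = T)
    (hE : T ∩ extremalD n = ∅ ∨ extremalD n ⊆ T) :
    {T' ∈ orbD n T | sigmaD n '' T' = T'} = {T, tauD n '' T} ∧
    tauPrimeD n '' T = T ∧
    tauPrimeD n '' (tauD n '' T) = tauD n '' T ∧
    (tauD n '' T = T → {T' ∈ orbD n T | sigmaD n '' T' = T'} = {T}) ∧
    (tauD n '' T ≠ T → {T' ∈ orbD n T | sigmaD n '' T' = T'}.ncard = 2) := by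
  have h3 : 3 ≤ n := by omega
  have hτ' := tauPrimeD_image_eq_self h3 hE
  have hfix : {T' ∈ orbD n T | sigmaD n '' T' = T'} = {T, tauD n '' T} := by
    rw [orbD_eq_pair hτ', Set.sep_eq_self_iff_mem_true]
    rintro _ (rfl | rfl)
    exacts [hσ, sigmaD_image_tauD_image h3 hσ hτ']
  refine ⟨hfix, hτ', tauPrimeD_image_tauD_image h3 hτ', fun h => ?_, fun h => ?_⟩
  · rw [hfix, h, Set.pair_eq_singleton]
  · rw [hfix]
    exact Set.ncard_pair (Ne.symm h)
end

section
/- Every nonzero element a of D ⊗[k] LaurentSeries k can be written as a = (1 ⊗ tⁿ) * Φ(u) for some n : ℤ and some unit u of D ⊗[k] PowerSeries k. In particular D ⊗[k] k((t)) is a division ring, and every unit of D ⊗[k] k((t)) is the product of a unit of k((t)) (embedded as 1 ⊗ −) and the image under Φ of a unit of D ⊗[k] k[[t]]. -/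
/-!
A `k`-basis `(bᵢ)` of `D` identifies `D ⊗[k] k⸨t⸩` with `D⸨t⸩`, the tensor `∑ bᵢ ⊗ fᵢ` becoming the
series `∑ₙ (∑ᵢ fᵢ(n) bᵢ) tⁿ`; the same map identifies `D ⊗[k] k⟦t⟧` with `D⟦t⟧`, compatibly with
`Φ`. A nonzero `g : D⸨t⸩` is `t ^ g.order` times a power series whose constant coefficient is the
leading coefficient of `g`, a nonzero element of the division ring `D`, so this power series is a
unit of `D⟦t⟧`.
-/

open scoped TensorProduct

-- `HahnSeries.powerSeriesAlgebra` is a second, non-defeq `k`-algebra structure on `k⸨t⸩`.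
attribute [-instance] HahnSeries.powerSeriesAlgebra

namespace HahnSeries

section Linear

variable {Γ R U V : Type*} [PartialOrder Γ] [Semiring R] [AddCommMonoid U] [Module R U]
  [AddCommMonoid V] [Module R V]

@[simps]
def mapLinearMap (f : U →ₗ[R] V) : HahnSeries Γ U →ₗ[R] HahnSeries Γ V where
  toFun x := x.map f
  map_add' _ _ := HahnSeries.map_add f.toAddMonoidHom
  map_smul' _ _ := HahnSeries.map_smul f

variable {k M ι : Type*} [CommSemiring k] [AddCommMonoid M] [Module k M] [Fintype ι]

variable (Γ) in
noncomputable def hahnSeriesToTensor (b : Module.Basis ι k M) :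
    HahnSeries Γ M →ₗ[k] M ⊗[k] HahnSeries Γ k :=
  ∑ i, (TensorProduct.mk k M (HahnSeries Γ k) (b i)).comp (mapLinearMap (b.coord i))

theorem hahnSeriesToTensor_apply (b : Module.Basis ι k M) (g : HahnSeries Γ M) :
    hahnSeriesToTensor Γ b g = ∑ i, b i ⊗ₜ g.map (b.coord i) := by
  simp [hahnSeriesToTensor]

end Linear

section Tensor

variable {Γ k D : Type*} [AddCommMonoid Γ] [PartialOrder Γ] [IsOrderedCancelAddMonoid Γ]
  [CommSemiring k] [Semiring D] [Algebra k D]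

variable (Γ k D) in
@[simps]
noncomputable def mapAlgebraMap : HahnSeries Γ k →ₐ[k] HahnSeries Γ D where
  toFun f := f.map (algebraMap k D)
  map_one' := HahnSeries.map_one (algebraMap k D).toMonoidWithZeroHom
  map_mul' _ _ := HahnSeries.map_mul (algebraMap k D).toNonUnitalRingHom
  map_zero' := HahnSeries.map_zero (algebraMap k D).toZeroHom
  map_add' _ _ := HahnSeries.map_add (algebraMap k D).toAddMonoidHom
  commutes' _ := by
    ext
    simp [algebraMap_apply, coeff_single, apply_ite (algebraMap k D)]

variable (Γ k D) in
noncomputable def tensorToHahnSeries : D ⊗[k] HahnSeries Γ k →ₐ[k] HahnSeries Γ D :=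
  Algebra.TensorProduct.lift
    { (C : D →+* HahnSeries Γ D) with commutes' := fun _ => algebraMap_apply.symm }
    (mapAlgebraMap Γ k D)
    fun d f => by
      ext g
      simp [C_apply, Algebra.commutes]

theorem tensorToHahnSeries_tmul (d : D) (f : HahnSeries Γ k) :
    tensorToHahnSeries Γ k D (d ⊗ₜ f) = C d * f.map (algebraMap k D) :=
  Algebra.TensorProduct.lift_tmul _ _ _ _ _

@[simp]
theorem coeff_tensorToHahnSeries_tmul (d : D) (f : HahnSeries Γ k) (g : Γ) :
    (tensorToHahnSeries Γ k D (d ⊗ₜ f)).coeff g = d * algebraMap k D (f.coeff g) := by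
  rw [tensorToHahnSeries_tmul, C_apply, coeff_single_zero_mul, map_coeff]

theorem tensorToHahnSeries_one_tmul_single (n : Γ) :
    tensorToHahnSeries Γ k D (1 ⊗ₜ single n 1) = single n 1 := by
  ext g
  simp [coeff_single, apply_ite (algebraMap k D)]

theorem tensorToHahnSeries_tmul_embDomain {Γ' : Type*} [AddCommMonoid Γ'] [PartialOrder Γ']
    [IsOrderedCancelAddMonoid Γ'] (f : Γ ↪o Γ') (d : D) (x : HahnSeries Γ k) :
    tensorToHahnSeries Γ' k D (d ⊗ₜ embDomain f x) =
      embDomain f (tensorToHahnSeries Γ k D (d ⊗ₜ x)) := by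
  ext z
  by_cases hz : z ∈ Set.range f
  · obtain ⟨a, rfl⟩ := hz
    simp [embDomain_coeff]
  · simp [embDomain_of_notMem_range hz]

variable {ι : Type*} [Fintype ι]

theorem rightInverse_hahnSeriesToTensor (b : Module.Basis ι k D) :
    Function.RightInverse (hahnSeriesToTensor Γ b) (tensorToHahnSeries Γ k D) := by
  intro g
  ext n
  simp only [hahnSeriesToTensor_apply, map_sum, coeff_sum, coeff_tensorToHahnSeries_tmul,
    map_coeff, ← Algebra.commutes, ← Algebra.smul_def, Module.Basis.coord_apply]
  exact b.sum_repr (g.coeff n)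

theorem leftInverse_hahnSeriesToTensor (b : Module.Basis ι k D) :
    Function.LeftInverse (hahnSeriesToTensor Γ b) (tensorToHahnSeries Γ k D) := by
  intro x
  induction x with
  | zero => simp
  | add x y hx hy => rw [map_add, map_add, hx, hy]
  | tmul d f =>
    have hcoord (i : ι) :
        (tensorToHahnSeries Γ k D (d ⊗ₜ f)).map (b.coord i) = b.repr d i • f := by
      ext n
      simp [← Algebra.commutes, ← Algebra.smul_def, mul_comm]
    simp_rw [hahnSeriesToTensor_apply, hcoord, TensorProduct.tmul_smul, TensorProduct.smul_tmul',
      ← TensorProduct.sum_tmul, b.sum_repr d]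

variable [Module.Free k D] [Module.Finite k D]

variable (Γ k D) in
noncomputable def tensorEquiv : D ⊗[k] HahnSeries Γ k ≃ₐ[k] HahnSeries Γ D :=
  AlgEquiv.ofBijective (tensorToHahnSeries Γ k D)
    ⟨(leftInverse_hahnSeriesToTensor (Module.Free.chooseBasis k D)).injective,
      (rightInverse_hahnSeriesToTensor (Module.Free.chooseBasis k D)).surjective⟩

@[simp]
theorem tensorEquiv_apply (x : D ⊗[k] HahnSeries Γ k) :
    tensorEquiv Γ k D x = tensorToHahnSeries Γ k D x :=
  rfl

end Tensor

section PowerSeries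

variable {Γ k D : Type*} [CommSemiring k] [Semiring D] [Algebra k D] [Module.Free k D]
  [Module.Finite k D]

variable (k D) in
noncomputable def tensorPowerSeriesEquiv : D ⊗[k] PowerSeries k ≃ₐ[k] PowerSeries D :=
  (Algebra.TensorProduct.congr AlgEquiv.refl (toPowerSeriesAlg k).symm).trans
    ((tensorEquiv ℕ k D).trans (toPowerSeriesAlg k))

theorem tensorEquiv_map_ofPowerSeriesAlg [Semiring Γ] [PartialOrder Γ] [IsStrictOrderedRing Γ]
    (x : D ⊗[k] PowerSeries k) :
    tensorEquiv Γ k D (Algebra.TensorProduct.map (AlgHom.id k D) (ofPowerSeriesAlg Γ k) x) =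
      ofPowerSeries Γ D (tensorPowerSeriesEquiv k D x) := by
  induction x with
  | zero => simp
  | add x y hx hy => rw [map_add, map_add, map_add, map_add, hx, hy]
  | tmul d p =>
    have hp : ofPowerSeriesAlg Γ k p =
        embDomain Nat.castOrderEmbedding ((toPowerSeriesAlg k).symm p) :=
      ofPowerSeries_apply p
    rw [Algebra.TensorProduct.map_tmul, AlgHom.id_apply, hp, tensorEquiv_apply,
      tensorToHahnSeries_tmul_embDomain, ofPowerSeries_apply]
    exact congrArg _ ((toPowerSeriesAlg k).symm_apply_apply _).symm

end PowerSeries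

end HahnSeries

theorem LaurentSeries.isUnit_powerSeriesPart {R : Type*} [Ring R] {x : LaurentSeries R}
    (hx : IsUnit x.leadingCoeff) : IsUnit x.powerSeriesPart := by
  rwa [PowerSeries.isUnit_iff_constantCoeff, ← PowerSeries.coeff_zero_eq_constantCoeff_apply,
    LaurentSeries.powerSeriesPart_coeff, Nat.cast_zero, add_zero, ← HahnSeries.leadingCoeff_eq]

open HahnSeries in
theorem exists_eq_one_tmul_single_mul_map_unit {k D : Type*} [Field k] [DivisionRing D]
    [Algebra k D] [FiniteDimensional k D] {a : D ⊗[k] LaurentSeries k} (ha : a ≠ 0) :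
    ∃ (n : ℤ) (u : (D ⊗[k] PowerSeries k)ˣ), a = ((1 : D) ⊗ₜ single n 1) *
      Algebra.TensorProduct.map (AlgHom.id k D) (ofPowerSeriesAlg ℤ k) u := by
  have hg : tensorEquiv ℤ k D a ≠ 0 := (map_ne_zero_iff _ (tensorEquiv ℤ k D).injective).mpr ha
  obtain ⟨u, hu⟩ := (LaurentSeries.isUnit_powerSeriesPart
    (isUnit_iff_ne_zero.mpr (leadingCoeff_ne_zero.mpr hg))).map (tensorPowerSeriesEquiv k D).symm
  refine ⟨(tensorEquiv ℤ k D a).order, u, (tensorEquiv ℤ k D).injective ?_⟩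
  rw [map_mul, tensorEquiv_map_ofPowerSeriesAlg, hu, AlgEquiv.apply_symm_apply, tensorEquiv_apply,
    tensorEquiv_apply, tensorToHahnSeries_one_tmul_single,
    LaurentSeries.single_order_mul_powerSeriesPart]

/-- Let `D` be a division ring that is a finite-dimensional algebra over a field `k`, and
let `Φ : D ⊗[k] k⟦t⟧ →ₐ[k] D ⊗[k] k⸨t⸩` be induced by the canonical embedding
`k⟦t⟧ → k⸨t⸩`. Every nonzero `a : D ⊗[k] k⸨t⸩` can be written as
`a = (1 ⊗ tⁿ) * Φ u` with `n : ℤ` and `u` a unit of `D ⊗[k] k⟦t⟧`. In particular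
`D ⊗[k] k⸨t⸩` is a division ring, and every unit of `D ⊗[k] k⸨t⸩` is the product of a
unit of `k⸨t⸩` (embedded as `1 ⊗ −`) and the image under `Φ` of a unit of
`D ⊗[k] k⟦t⟧`. -/
theorem stmt17 {k D : Type*} [Field k] [DivisionRing D] [Algebra k D]
    [FiniteDimensional k D]
    (Φ : D ⊗[k] PowerSeries k →ₐ[k] D ⊗[k] LaurentSeries k)
    (hΦ : Φ = Algebra.TensorProduct.map (AlgHom.id k D) (HahnSeries.ofPowerSeriesAlg ℤ k)) :
    (∀ a : D ⊗[k] LaurentSeries k, a ≠ 0 →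
      ∃ (n : ℤ) (u : (D ⊗[k] PowerSeries k)ˣ),
        a = ((1 : D) ⊗ₜ[k] (HahnSeries.single n 1 : LaurentSeries k)) * Φ u) ∧
    (∀ a : D ⊗[k] LaurentSeries k, a ≠ 0 → IsUnit a) ∧
    (∀ w : (D ⊗[k] LaurentSeries k)ˣ,
      ∃ (c : (LaurentSeries k)ˣ) (u : (D ⊗[k] PowerSeries k)ˣ),
        (w : D ⊗[k] LaurentSeries k) = ((1 : D) ⊗ₜ[k] (c : LaurentSeries k)) * Φ u) := by
  subst hΦ
  have decomp (a : D ⊗[k] LaurentSeries k) (ha : a ≠ 0) :=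
    exists_eq_one_tmul_single_mul_map_unit ha
  have isUnit_single (n : ℤ) : IsUnit (HahnSeries.single n (1 : k)) :=
    isUnit_iff_ne_zero.mpr (HahnSeries.single_ne_zero one_ne_zero)
  refine ⟨decomp, fun a ha => ?_, fun w => ?_⟩
  · obtain ⟨n, u, rfl⟩ := decomp a ha
    exact ((isUnit_single n).map Algebra.TensorProduct.includeRight).mul (u.isUnit.map _)
  · obtain ⟨n, u, hw⟩ := decomp w w.ne_zero
    exact ⟨(isUnit_single n).unit, u, hw⟩
end
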